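/- Let J₂ₘ be the standard 2m×2m symplectic matrix. On Mat(2m×2m, ℝ) define [A,B]_m = 2[ÃJB̃ − ǍJB̌]_sym + 2[ǍJB̃ + ÃJB̌]_skew, where Ã, Ǎ (resp. B̃, B̌) are the symmetric and antisymmetric parts of A (resp. B), and J = J₂ₘ. Then the map h: Mat(2m×2m, ℝ) → Mat(2m×2m, ℂ), h(A) = J(Ã + iǍ), satisfies h([A,B]_m) = [h(A), h(B)] (commutator), i.e., h is a Lie algebra homomorphism, and h is a real-linear bijection onto u(m,m; iJ). -/

import Mathlib

open Matrix

noncomputable section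

variable {m : ℕ}

def symPart (A : Matrix (Fin m ⊕ Fin m) (Fin m ⊕ Fin m) ℝ) := (2 : ℝ)⁻¹ • (A + Aᵀ)
def skewPart (A : Matrix (Fin m ⊕ Fin m) (Fin m ⊕ Fin m) ℝ) := (2 : ℝ)⁻¹ • (A - Aᵀ)

/-- The bracket [A,B]_m on Mat(2m×2m, ℝ). -/
def brm (A B : Matrix (Fin m ⊕ Fin m) (Fin m ⊕ Fin m) ℝ) :
    Matrix (Fin m ⊕ Fin m) (Fin m ⊕ Fin m) ℝ :=
  letI J := Matrix.J (Fin m) ℝ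
  (2 : ℝ) • symPart (symPart A * J * symPart B - skewPart A * J * skewPart B)
    + (2 : ℝ) • skewPart (skewPart A * J * symPart B + symPart A * J * skewPart B)

/-- The map h(A) = J(Ã + iǍ) into complex matrices. -/
def hmap (A : Matrix (Fin m ⊕ Fin m) (Fin m ⊕ Fin m) ℝ) :
    Matrix (Fin m ⊕ Fin m) (Fin m ⊕ Fin m) ℂ :=
  ((Matrix.J (Fin m) ℝ).map (Complex.ofReal)) *
    ((symPart A).map (Complex.ofReal) + Complex.I • (skewPart A).map (Complex.ofReal))


/-! Write `N(A) = Ã + iǍ`. It is Hermitian, and `A ↦ N(A)` is a real-linear bijection from real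
matrices onto Hermitian ones, with inverse `N ↦ Re N + Im N`. Since `h(A) = J N(A)` and `J² = -1`,
`(iJ) h(A) = -i N(A)`, which is skew-Hermitian exactly when `N(A)` is Hermitian: this identifies
the image of `h` with `u(m,m; iJ)`. For the bracket, `h(A) h(B) - h(B) h(A) = J (Z - N(B) J N(A))`
with `Z = N(A) J N(B)`; as `Jᴴ = -J`, `N(B) J N(A) = -Zᴴ`, and the real and imaginary parts of
`Z + Zᴴ` are `2[ÃJB̃ - ǍJB̌]_sym` and `2[ǍJB̃ + ÃJB̌]_skew`, so `Z + Zᴴ = N([A,B]_m)`. -/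

namespace Matrix

variable {n p q : Type*}

def ofReIm (X Y : Matrix n p ℝ) : Matrix n p ℂ :=
  X.map Complex.ofReal + Complex.I • Y.map Complex.ofReal

@[simp]
lemma ofReIm_apply (X Y : Matrix n p ℝ) (i : n) (j : p) : ofReIm X Y i j = ⟨X i j, Y i j⟩ := by
  apply Complex.ext <;> simp [ofReIm]

lemma ofReIm_injective {X Y X' Y' : Matrix n p ℝ} (h : ofReIm X Y = ofReIm X' Y') :
    X = X' ∧ Y = Y' :=
  ⟨ext fun i j => by simpa using congr_arg (fun M => (M i j).re) h,
    ext fun i j => by simpa using congr_arg (fun M => (M i j).im) h⟩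

lemma ofReIm_re_im (M : Matrix n p ℂ) : ofReIm (M.map Complex.re) (M.map Complex.im) = M := by
  ext i j; simp

lemma ofReIm_zero (X : Matrix n p ℝ) : ofReIm X 0 = X.map Complex.ofReal := by
  ext i j; simp [Complex.ext_iff]

lemma ofReIm_add (X Y X' Y' : Matrix n p ℝ) :
    ofReIm (X + X') (Y + Y') = ofReIm X Y + ofReIm X' Y' := by
  ext i j; simp [Complex.ext_iff]

lemma ofReIm_smul (c : ℝ) (X Y : Matrix n p ℝ) : ofReIm (c • X) (c • Y) = c • ofReIm X Y := by
  ext i j; simp [Complex.ext_iff]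

lemma ofReIm_mul [Fintype p] (X Y : Matrix n p ℝ) (X' Y' : Matrix p q ℝ) :
    ofReIm X Y * ofReIm X' Y' = ofReIm (X * X' - Y * Y') (X * Y' + Y * X') := by
  ext i j
  simp [Complex.ext_iff, mul_apply, Complex.re_sum, Complex.im_sum, Finset.sum_sub_distrib,
    Finset.sum_add_distrib]

lemma conjTranspose_ofReIm (X Y : Matrix n p ℝ) : (ofReIm X Y)ᴴ = ofReIm Xᵀ (-Yᵀ) := by
  ext i j; simp [Complex.ext_iff]

lemma isHermitian_ofReIm_iff {X Y : Matrix n n ℝ} :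
    (ofReIm X Y).IsHermitian ↔ Xᵀ = X ∧ Yᵀ = -Y := by
  rw [IsHermitian, conjTranspose_ofReIm]
  refine ⟨fun h => ?_, fun ⟨hX, hY⟩ => by rw [hX, hY, neg_neg]⟩
  obtain ⟨hX, hY⟩ := ofReIm_injective h
  exact ⟨hX, neg_eq_iff_eq_neg.mp hY⟩

lemma conjTranspose_neg_I_smul_add_eq_zero_iff (N : Matrix n n ℂ) :
    (-Complex.I • N)ᴴ + -Complex.I • N = 0 ↔ N.IsHermitian := by
  rw [conjTranspose_smul, star_neg, Complex.star_def, Complex.conj_I, neg_neg, neg_smul,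
    ← sub_eq_add_neg, ← smul_sub, smul_eq_zero, sub_eq_zero]
  simp [IsHermitian, Complex.I_ne_zero]

end Matrix

local notation "Jℂ" => Matrix.map (J (Fin m) ℝ) Complex.ofReal

lemma J_map_ofReal_mul_self : Jℂ * Jℂ = -1 := by
  have h : (J (Fin m) ℝ * J (Fin m) ℝ).map Complex.ofReal = Jℂ * Jℂ :=
    Matrix.map_mul (f := Complex.ofRealHom)
  rw [← h, J_squared, Matrix.map_neg, Matrix.map_one] <;> simp

lemma neg_J_map_ofReal_mul_mul (M : Matrix (Fin m ⊕ Fin m) (Fin m ⊕ Fin m) ℂ) :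
    -(Jℂ * (Jℂ * M)) = M := by
  rw [← mul_assoc, J_map_ofReal_mul_self, neg_mul, one_mul, neg_neg]

lemma conjTranspose_J_map_ofReal : (Jℂ)ᴴ = -Jℂ := by
  rw [← conjTranspose_map _ fun x => by simp, conjTranspose_eq_transpose_of_trivial, J_transpose,
    Matrix.map_neg]
  simp

section SymSkew

variable (A B : Matrix (Fin m ⊕ Fin m) (Fin m ⊕ Fin m) ℝ)
  {X Y : Matrix (Fin m ⊕ Fin m) (Fin m ⊕ Fin m) ℝ}

lemma transpose_symPart : (symPart A)ᵀ = symPart A := by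
  simp [symPart, add_comm]

lemma transpose_skewPart : (skewPart A)ᵀ = -skewPart A := by
  simp [skewPart, ← smul_neg]

lemma symPart_add_skewPart : symPart A + skewPart A = A := by
  simp only [symPart, skewPart]; module

lemma two_smul_symPart : (2 : ℝ) • symPart A = A + Aᵀ := by
  simp [symPart, smul_smul]

lemma two_smul_skewPart : (2 : ℝ) • skewPart A = A - Aᵀ := by
  simp [skewPart, smul_smul]

lemma symPart_smul_add (c : ℝ) : symPart (c • A + B) = c • symPart A + symPart B := by
  simp only [symPart, transpose_add, transpose_smul]; module

lemma skewPart_smul_add (c : ℝ) : skewPart (c • A + B) = c • skewPart A + skewPart B := by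
  simp only [skewPart, transpose_add, transpose_smul]; module

lemma symPart_add_of_transpose (hX : Xᵀ = X) (hY : Yᵀ = -Y) : symPart (X + Y) = X := by
  simp only [symPart, transpose_add, hX, hY]; module

lemma skewPart_add_of_transpose (hX : Xᵀ = X) (hY : Yᵀ = -Y) : skewPart (X + Y) = Y := by
  simp only [skewPart, transpose_add, hX, hY]; module

end SymSkew

def symAddISkew (A : Matrix (Fin m ⊕ Fin m) (Fin m ⊕ Fin m) ℝ) :
    Matrix (Fin m ⊕ Fin m) (Fin m ⊕ Fin m) ℂ :=
  ofReIm (symPart A) (skewPart A)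

section SymAddISkew

variable (A B : Matrix (Fin m ⊕ Fin m) (Fin m ⊕ Fin m) ℝ)

lemma hmap_eq_J_map_ofReal_mul : hmap A = Jℂ * symAddISkew A := rfl

lemma isHermitian_symAddISkew : (symAddISkew A).IsHermitian :=
  isHermitian_ofReIm_iff.2 ⟨transpose_symPart A, transpose_skewPart A⟩

lemma symAddISkew_smul_add (c : ℝ) :
    symAddISkew (c • A + B) = c • symAddISkew A + symAddISkew B := by
  rw [symAddISkew, symPart_smul_add, skewPart_smul_add, ofReIm_add, ofReIm_smul]
  rfl

lemma symAddISkew_injective : Function.Injective (symAddISkew (m := m)) := by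
  intro A B h
  obtain ⟨hsym, hskew⟩ := ofReIm_injective h
  rw [← symPart_add_skewPart A, ← symPart_add_skewPart B, hsym, hskew]

lemma exists_symAddISkew_eq {N : Matrix (Fin m ⊕ Fin m) (Fin m ⊕ Fin m) ℂ}
    (hN : N.IsHermitian) : ∃ A, symAddISkew A = N := by
  rw [← ofReIm_re_im N, isHermitian_ofReIm_iff] at hN
  refine ⟨N.map Complex.re + N.map Complex.im, ?_⟩
  rw [symAddISkew, symPart_add_of_transpose hN.1 hN.2, skewPart_add_of_transpose hN.1 hN.2,
    ofReIm_re_im]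

lemma symAddISkew_brm : symAddISkew (brm A B) =
    symAddISkew A * Jℂ * symAddISkew B - symAddISkew B * Jℂ * symAddISkew A := by
  set P := symPart A * J (Fin m) ℝ * symPart B - skewPart A * J (Fin m) ℝ * skewPart B
  set Q := skewPart A * J (Fin m) ℝ * symPart B + symPart A * J (Fin m) ℝ * skewPart B
  have hPQ : symAddISkew A * Jℂ * symAddISkew B = ofReIm P Q := by
    simp only [symAddISkew, ← ofReIm_zero, ofReIm_mul, mul_zero, sub_zero, zero_add]
    rw [add_comm]
  have hQP : symAddISkew B * Jℂ * symAddISkew A = -(ofReIm P Q)ᴴ := by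
    rw [← hPQ, conjTranspose_mul, conjTranspose_mul, isHermitian_symAddISkew,
      isHermitian_symAddISkew, conjTranspose_J_map_ofReal, neg_mul, mul_neg, neg_neg, mul_assoc]
  have hbrm : brm A B = (P + Pᵀ) + (Q - Qᵀ) := by
    rw [← two_smul_symPart, ← two_smul_skewPart]; rfl
  have hP : (P + Pᵀ)ᵀ = P + Pᵀ := by rw [transpose_add, transpose_transpose, add_comm]
  have hQ : (Q - Qᵀ)ᵀ = -(Q - Qᵀ) := by rw [transpose_sub, transpose_transpose, neg_sub]
  rw [hPQ, hQP, hbrm, symAddISkew, symPart_add_of_transpose hP hQ,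
    skewPart_add_of_transpose hP hQ, sub_neg_eq_add, conjTranspose_ofReIm, ← ofReIm_add,
    ← sub_eq_add_neg]

end SymAddISkew

theorem hmap_lie_algebra_iso_u_mm :
    letI JC := (Matrix.J (Fin m) ℝ).map (Complex.ofReal)
    letI H := Complex.I • JC
    -- h is a Lie algebra homomorphism
    (∀ A B : Matrix (Fin m ⊕ Fin m) (Fin m ⊕ Fin m) ℝ,
      hmap (brm A B) = hmap A * hmap B - hmap B * hmap A) ∧
    -- h is real-linear
    (∀ (c : ℝ) (A B : Matrix (Fin m ⊕ Fin m) (Fin m ⊕ Fin m) ℝ),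
      hmap (c • A + B) = c • hmap A + hmap B) ∧
    -- h is injective
    Function.Injective (hmap (m := m)) ∧
    -- the range of h is exactly u(m,m; iJ)
    (∀ A : Matrix (Fin m ⊕ Fin m) (Fin m ⊕ Fin m) ℝ, (H * hmap A)ᴴ + H * hmap A = 0) ∧
    (∀ M : Matrix (Fin m ⊕ Fin m) (Fin m ⊕ Fin m) ℂ,
      (H * M)ᴴ + H * M = 0 → ∃ A, hmap A = M) := by
  have hH (M : Matrix (Fin m ⊕ Fin m) (Fin m ⊕ Fin m) ℂ) :
      Complex.I • Jℂ * M = -Complex.I • -(Jℂ * M) := by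
    rw [neg_smul_neg, smul_mul_assoc]
  refine ⟨fun A B => ?_, fun c A B => ?_, fun A B h => ?_, fun A => ?_, fun M hM => ?_⟩
  · simp only [hmap_eq_J_map_ofReal_mul, symAddISkew_brm, mul_sub, mul_assoc]
  · simp only [hmap_eq_J_map_ofReal_mul, symAddISkew_smul_add, mul_add, mul_smul_comm]
  · refine symAddISkew_injective ?_
    rw [← neg_J_map_ofReal_mul_mul (symAddISkew A), ← hmap_eq_J_map_ofReal_mul, h,
      hmap_eq_J_map_ofReal_mul, neg_J_map_ofReal_mul_mul]
  · rw [hH, hmap_eq_J_map_ofReal_mul, neg_J_map_ofReal_mul_mul,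
      conjTranspose_neg_I_smul_add_eq_zero_iff]
    exact isHermitian_symAddISkew A
  · rw [hH, conjTranspose_neg_I_smul_add_eq_zero_iff] at hM
    obtain ⟨A, hA⟩ := exists_symAddISkew_eq hM
    refine ⟨A, ?_⟩
    rw [hmap_eq_J_map_ofReal_mul, hA, mul_neg, neg_J_map_ofReal_mul_mul]

end
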